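/- arXiv:1407.0291 — 2 statements merged into one kernel-verified Lean document; each statement's English description precedes it below -/
import Mathlib

section
/- Let A be an invertible symmetric n×n real matrix and let S be an m-dimensional linear subspace of ℝⁿ. If S₁ is a subspace of S of dimension l such that ‖P_S(Ax)‖ ≤ (2‖A⁻¹‖)⁻¹‖x‖ for every x ∈ S₁ (where P_S is the orthogonal projection onto S), then S₁ ∩ A⁻¹(S) = {0}, and consequently l ≤ n − m. -/
/-!
For `x ∈ S₁ ∩ A⁻¹(S)` the projection fixes `A x`, so the hypothesis reads
`‖A x‖ ≤ ‖x‖ / (2‖A⁻¹‖)`, which together with `‖x‖ ≤ ‖A⁻¹‖ ‖A x‖` forces `x = 0`.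
Since `A⁻¹(S)` has dimension `m`, two subspaces meeting trivially give `l + m ≤ n`.
-/

open scoped InnerProductSpace

theorem ContinuousLinearEquiv.eq_zero_of_norm_apply_le {𝕜 E F : Type*}
    [NontriviallyNormedField 𝕜] [NormedAddCommGroup E] [NormedAddCommGroup F]
    [NormedSpace 𝕜 E] [NormedSpace 𝕜 F] (A : E ≃L[𝕜] F) {x : E}
    (hx : ‖A x‖ ≤ (2 * ‖(A.symm : F →L[𝕜] E)‖)⁻¹ * ‖x‖) : x = 0 := by
  set B : F →L[𝕜] E := (A.symm : F →L[𝕜] E)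
  have hB : ‖B‖ * (2 * ‖B‖)⁻¹ ≤ 2⁻¹ := by
    rcases (norm_nonneg B).eq_or_lt with h | h
    · simp [← h]
    · rw [mul_inv, mul_left_comm, mul_inv_cancel₀ h.ne', mul_one]
  have hhalf : ‖x‖ ≤ 2⁻¹ * ‖x‖ :=
    calc ‖x‖ = ‖B (A x)‖ := by simp [B]
      _ ≤ ‖B‖ * ‖A x‖ := B.le_opNorm _
      _ ≤ ‖B‖ * ((2 * ‖B‖)⁻¹ * ‖x‖) := by gcongr
      _ = ‖B‖ * (2 * ‖B‖)⁻¹ * ‖x‖ := by ring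
      _ ≤ 2⁻¹ * ‖x‖ := by gcongr
  exact norm_le_zero_iff.mp (by linarith [norm_nonneg x])

theorem Submodule.inf_map_symm_eq_bot_of_norm_orthogonalProjection_le {𝕜 E : Type*} [RCLike 𝕜]
    [NormedAddCommGroup E] [InnerProductSpace 𝕜 E] (A : E ≃L[𝕜] E) (S S₁ : Submodule 𝕜 E)
    [S.HasOrthogonalProjection]
    (hproj : ∀ x ∈ S₁, ‖(S.orthogonalProjectionOnto (A x) : E)‖
      ≤ (2 * ‖(A.symm : E →L[𝕜] E)‖)⁻¹ * ‖x‖) :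
    S₁ ⊓ S.map (A.symm : E →ₗ[𝕜] E) = ⊥ := by
  refine (Submodule.eq_bot_iff _).2 fun x ⟨hx₁, hx⟩ => A.eq_zero_of_norm_apply_le ?_
  have hAx : A x ∈ S := by simpa using (Submodule.mem_map_equiv S).1 hx
  simpa [Submodule.starProjection_eq_self_iff.2 hAx] using hproj x hx₁

theorem stmt_0_general (n m l : ℕ)
    (A : EuclideanSpace ℝ (Fin n) ≃L[ℝ] EuclideanSpace ℝ (Fin n))
    (S S₁ : Submodule ℝ (EuclideanSpace ℝ (Fin n)))
    (hSm : Module.finrank ℝ S = m)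
    (hS₁l : Module.finrank ℝ S₁ = l)
    (hproj : ∀ x ∈ S₁, ‖(S.orthogonalProjectionOnto (A x) : EuclideanSpace ℝ (Fin n))‖
      ≤ (2 * ‖(A.symm : EuclideanSpace ℝ (Fin n) →L[ℝ] EuclideanSpace ℝ (Fin n))‖)⁻¹ * ‖x‖) :
    S₁ ⊓ S.map (A.symm : EuclideanSpace ℝ (Fin n) →ₗ[ℝ] EuclideanSpace ℝ (Fin n)) = ⊥
      ∧ l ≤ n - m := by
  have hdisj := Submodule.inf_map_symm_eq_bot_of_norm_orthogonalProjection_le A S S₁ hproj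
  refine ⟨hdisj, ?_⟩
  have hdim := Submodule.finrank_add_finrank_le_of_disjoint (disjoint_iff.2 hdisj)
  rw [hS₁l, LinearEquiv.finrank_map_eq, hSm, finrank_euclideanSpace_fin] at hdim
  omega

/-- Lemma on sections: if `A` is an invertible symmetric operator on `ℝⁿ`, `S` an
`m`-dimensional subspace and `S₁ ⊆ S` an `l`-dimensional subspace on which the
projection of `Ax` to `S` is small, then `S₁ ∩ A⁻¹S = {0}` and `l ≤ n - m`. -/
theorem stmt_0 (n m l : ℕ)
    (A : EuclideanSpace ℝ (Fin n) ≃L[ℝ] EuclideanSpace ℝ (Fin n))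
    (hsym : ∀ x y : EuclideanSpace ℝ (Fin n), ⟪A x, y⟫_ℝ = ⟪x, A y⟫_ℝ)
    (S S₁ : Submodule ℝ (EuclideanSpace ℝ (Fin n)))
    (hSm : Module.finrank ℝ S = m)
    (hS₁S : S₁ ≤ S) (hS₁l : Module.finrank ℝ S₁ = l)
    (hproj : ∀ x ∈ S₁, ‖(S.orthogonalProjectionOnto (A x) : EuclideanSpace ℝ (Fin n))‖
      ≤ (2 * ‖(A.symm : EuclideanSpace ℝ (Fin n) →L[ℝ] EuclideanSpace ℝ (Fin n))‖)⁻¹ * ‖x‖) :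
    S₁ ⊓ S.map (A.symm : EuclideanSpace ℝ (Fin n) →ₗ[ℝ] EuclideanSpace ℝ (Fin n)) = ⊥
      ∧ l ≤ n - m :=
  stmt_0_general n m l A S S₁ hSm hS₁l hproj
end

section
/- Let K : (0,1) → (0,∞) and suppose there exist a > 0 and, for every ε > 0, a constant C_ε such that K(δ) ≤ C_ε δ^{−a−ε} K(δ^{2/3}) for all δ ∈ (0,1), and suppose K is bounded on [δ₀, 1) for every δ₀ > 0. Then for every ε > 0 there is a constant C'_ε with K(δ) ≤ C'_ε δ^{−3a−ε} for all δ ∈ (0,1). -/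
/-- Abstract induction-on-scales lemma: a single-step inequality lowering the scale
from `δ` to `δ^(2/3)` with loss `δ^(-a-ε)` iterates to the bound `K(δ) ≲ δ^(-3a-ε)`. -/
theorem stmt_4 (K : ℝ → ℝ) (a : ℝ) (ha : 0 < a)
    (hpos : ∀ δ ∈ Set.Ioo (0:ℝ) 1, 0 < K δ)
    (hstep : ∀ ε > 0, ∃ C : ℝ, ∀ δ ∈ Set.Ioo (0:ℝ) 1,
      K δ ≤ C * δ ^ (-(a + ε)) * K (δ ^ ((2:ℝ)/3)))
    (hbdd : ∀ δ₀ > 0, ∃ B : ℝ, ∀ δ ∈ Set.Ico δ₀ (1:ℝ), K δ ≤ B) :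
    ∀ ε > 0, ∃ C' : ℝ, ∀ δ ∈ Set.Ioo (0:ℝ) 1, K δ ≤ C' * δ ^ (-(3*a + ε)) := by
  intro ε hε
  obtain ⟨C, hC⟩ := hstep (ε/6) (by positivity)
  set C₁ : ℝ := max C 1 with hC₁def
  have hC₁1 : (1:ℝ) ≤ C₁ := le_max_right _ _
  have hC₁0 : (0:ℝ) < C₁ := lt_of_lt_of_le one_pos hC₁1
  set δ₁ : ℝ := min (1/2) (C₁ ^ (-(6/ε))) with hδ₁def
  have hδ₁0 : 0 < δ₁ := lt_min (by norm_num) (Real.rpow_pos_of_pos hC₁0 _)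
  have hδ₁1 : δ₁ < 1 := lt_of_le_of_lt (min_le_left _ _) (by norm_num)
  obtain ⟨B, hB⟩ := hbdd δ₁ hδ₁0
  refine ⟨max B 0, ?_⟩
  set C' := max B 0 with hC'def
  have hC'0 : 0 ≤ C' := le_max_right _ _
  have base : ∀ δ ∈ Set.Ioo (0:ℝ) 1, δ₁ ≤ δ → K δ ≤ C' * δ ^ (-(3*a+ε)) := by
    intro δ hδ hδ₁δ
    have h1 : (1:ℝ) ≤ δ ^ (-(3*a+ε)) :=
      Real.one_le_rpow_of_pos_of_le_one_of_nonpos hδ.1 hδ.2.le (by nlinarith)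
    calc K δ ≤ B := hB δ ⟨hδ₁δ, hδ.2⟩
      _ ≤ C' := le_max_left _ _
      _ ≤ C' * δ ^ (-(3*a+ε)) := le_mul_of_one_le_right hC'0 h1
  have main : ∀ n : ℕ, ∀ δ ∈ Set.Ioo (0:ℝ) 1, δ₁ ^ (((3:ℝ)/2)^n) ≤ δ →
      K δ ≤ C' * δ ^ (-(3*a+ε)) := by
    intro n
    induction n with
    | zero =>
      intro δ hδ h
      exact base δ hδ (by simpa using h)
    | succ n ih =>
      intro δ hδ h
      rcases le_or_gt δ₁ δ with h' | h'
      · exact base δ hδ h'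
      · have hδ0 := hδ.1
        have hδlt1 := hδ.2
        have hδ23mem : δ ^ ((2:ℝ)/3) ∈ Set.Ioo (0:ℝ) 1 :=
          ⟨Real.rpow_pos_of_pos hδ0 _, Real.rpow_lt_one hδ0.le hδlt1 (by norm_num)⟩
        have hge : δ₁ ^ (((3:ℝ)/2)^n) ≤ δ ^ ((2:ℝ)/3) := by
          have key : (δ₁ ^ (((3:ℝ)/2)^(n+1))) ^ ((2:ℝ)/3) = δ₁ ^ (((3:ℝ)/2)^n) := by
            rw [← Real.rpow_natCast ((3:ℝ)/2) (n+1), ← Real.rpow_mul hδ₁0.le,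
                ← Real.rpow_natCast ((3:ℝ)/2) n]
            congr 1
            rw [← Real.rpow_natCast ((3:ℝ)/2) (n+1)] at *
            push_cast
            rw [Real.rpow_add (by norm_num : (0:ℝ) < 3/2), Real.rpow_one]
            ring
          calc δ₁ ^ (((3:ℝ)/2)^n) = (δ₁ ^ (((3:ℝ)/2)^(n+1))) ^ ((2:ℝ)/3) := key.symm
            _ ≤ δ ^ ((2:ℝ)/3) :=
              Real.rpow_le_rpow (Real.rpow_nonneg hδ₁0.le _) h (by norm_num)
        have hih := ih (δ ^ ((2:ℝ)/3)) hδ23mem hge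
        -- (δ^{2/3})^{-(3a+ε)} = δ^{(2/3)*(-(3a+ε))}
        have hrw : (δ ^ ((2:ℝ)/3)) ^ (-(3*a+ε)) = δ ^ ((2:ℝ)/3 * (-(3*a+ε))) :=
          (Real.rpow_mul hδ0.le _ _).symm
        rw [hrw] at hih
        -- C₁ ≤ δ^{-(ε/6)}
        have hCδ : C₁ ≤ δ ^ (-(ε/6)) := by
          have hδle : δ ≤ C₁ ^ (-(6/ε)) := le_trans h'.le (min_le_right _ _)
          have h2 : δ ^ (ε/6) ≤ (C₁ ^ (-(6/ε))) ^ (ε/6) :=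
            Real.rpow_le_rpow hδ0.le hδle (by positivity)
          have h3 : (C₁ ^ (-(6/ε))) ^ (ε/6) = C₁⁻¹ := by
            rw [← Real.rpow_mul hC₁0.le]
            have : -(6/ε) * (ε/6) = -1 := by field_simp
            rw [this, Real.rpow_neg_one]
          rw [h3] at h2
          have hp : 0 < δ ^ (ε/6) := Real.rpow_pos_of_pos hδ0 _
          have h4 := inv_anti₀ hp h2
          rw [inv_inv] at h4
          rw [Real.rpow_neg hδ0.le]
          exact h4
        have hKpos := hpos _ hδ23mem
        have hx : (0:ℝ) ≤ δ ^ (-(a+ε/6)) := (Real.rpow_pos_of_pos hδ0 _).le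
        calc K δ ≤ C * δ ^ (-(a+ε/6)) * K (δ ^ ((2:ℝ)/3)) := hC δ hδ
          _ ≤ C₁ * δ ^ (-(a+ε/6)) * (C' * δ ^ ((2:ℝ)/3 * -(3*a+ε))) := by
              have h5 : C * δ ^ (-(a+ε/6)) * K (δ ^ ((2:ℝ)/3)) ≤
                  C₁ * δ ^ (-(a+ε/6)) * K (δ ^ ((2:ℝ)/3)) := by
                apply mul_le_mul_of_nonneg_right _ hKpos.le
                exact mul_le_mul_of_nonneg_right (le_max_left C 1) hx
              refine h5.trans ?_
              exact mul_le_mul_of_nonneg_left hih (by positivity)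
          _ ≤ δ ^ (-(ε/6)) * δ ^ (-(a+ε/6)) * (C' * δ ^ ((2:ℝ)/3 * -(3*a+ε))) := by
              apply mul_le_mul_of_nonneg_right _ (by positivity)
              exact mul_le_mul_of_nonneg_right hCδ hx
          _ = C' * (δ ^ (-(ε/6)) * δ ^ (-(a+ε/6)) * δ ^ ((2:ℝ)/3 * -(3*a+ε))) := by
              ring
          _ = C' * δ ^ (-(3*a+ε)) := by
              rw [← Real.rpow_add hδ0, ← Real.rpow_add hδ0]
              congr 1
              ring
  intro δ hδ
  obtain ⟨n, hn⟩ := pow_unbounded_of_one_lt (Real.log δ / Real.log δ₁)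
    (by norm_num : (1:ℝ) < 3/2)
  apply main n δ hδ
  have hlogδ₁ : Real.log δ₁ < 0 := Real.log_neg hδ₁0 hδ₁1
  have h4 : ((3:ℝ)/2)^n * Real.log δ₁ < Real.log δ := by
    have := (div_lt_iff_of_neg hlogδ₁).mp hn
    linarith
  have : δ₁ ^ (((3:ℝ)/2)^n) = Real.exp (((3:ℝ)/2)^n * Real.log δ₁) := by
    rw [Real.rpow_def_of_pos hδ₁0, mul_comm]
  rw [this]
  calc Real.exp (((3:ℝ)/2)^n * Real.log δ₁) ≤ Real.exp (Real.log δ) :=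
        Real.exp_le_exp.mpr h4.le
    _ = δ := Real.exp_log hδ.1
end
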